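/- arXiv:2604.05603 — 5 statements merged into one kernel-verified Lean document; each statement's English description precedes it below -/
import Mathlib

section
/- Let P be a closed convex cone in ℝ^N with P ⊊ span(P) (i.e., P is not a linear subspace). Then there exists a continuous map r : B̄ ∩ P → S ∩ P such that r(x) = x for all x ∈ S ∩ P; that is, S ∩ P is a retract of B̄ ∩ P. -/
open scoped RealInnerProductSpace

/-- If the closed convex cone `P` is not a linear subspace, then `S ∩ P` is a
retract of `B̄ ∩ P`. -/
theorem retract_lemma {N : ℕ} (P : Set (EuclideanSpace ℝ (Fin N)))
    (hPclosed : IsClosed P) (hPconv : Convex ℝ P)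
    (hPcone : ∀ x ∈ P, ∀ l : ℝ, 0 < l → l • x ∈ P)
    (hProper : P ⊂ (Submodule.span ℝ P : Set (EuclideanSpace ℝ (Fin N)))) :
    ∃ r : EuclideanSpace ℝ (Fin N) → EuclideanSpace ℝ (Fin N),
      ContinuousOn r (Metric.closedBall (0 : EuclideanSpace ℝ (Fin N)) 1 ∩ P) ∧
      (∀ x ∈ Metric.closedBall (0 : EuclideanSpace ℝ (Fin N)) 1 ∩ P,
        r x ∈ Metric.sphere (0 : EuclideanSpace ℝ (Fin N)) 1 ∩ P) ∧
      (∀ x ∈ Metric.sphere (0 : EuclideanSpace ℝ (Fin N)) 1 ∩ P, r x = x) := by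
  classical
  rcases Set.eq_empty_or_nonempty P with hP | hP
  · exact ⟨id, continuousOn_id, by simp [hP], by simp [hP]⟩
  have hadd0 : (∀ u ∈ P, -u ∈ P) → ∀ a ∈ P, ∀ b ∈ P, a + b ∈ P := by
    intro h a ha b hb
    have hmid := hPconv ha hb (le_of_lt one_half_pos) (le_of_lt one_half_pos) (by norm_num)
    have := hPcone _ hmid 2 (by norm_num)
    rw [smul_add, smul_smul, smul_smul] at this
    norm_num at this
    exact this
  have hu : ∃ u ∈ P, -u ∉ P := by
    by_contra h
    push_neg at h
    obtain ⟨w, hw⟩ := hP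
    have h0 : (0 : EuclideanSpace ℝ (Fin N)) ∈ P := by
      have := hPconv hw (h w hw) (le_of_lt one_half_pos) (le_of_lt one_half_pos) (by norm_num)
      simpa using this
    have hsmul : ∀ (l : ℝ), ∀ a ∈ P, l • a ∈ P := by
      intro l a ha
      rcases lt_trichotomy l 0 with hl | hl | hl
      · have := hPcone _ (h a ha) (-l) (by linarith)
        simpa using this
      · simpa [hl] using h0
      · exact hPcone a ha l hl
    let p : Submodule ℝ (EuclideanSpace ℝ (Fin N)) :=
      { carrier := P
        add_mem' := fun ha hb => hadd0 h _ ha _ hb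
        zero_mem' := h0
        smul_mem' := fun l a ha => hsmul l a ha }
    have hle : Submodule.span ℝ P ≤ p :=
      Submodule.span_le.mpr (le_refl P : P ⊆ (p : Set (EuclideanSpace ℝ (Fin N))))
    exact hProper.2 fun y hy => hle hy
  obtain ⟨u, huP, hun⟩ := hu
  set g : EuclideanSpace ℝ (Fin N) → EuclideanSpace ℝ (Fin N) :=
    fun x => x + (1 - ‖x‖) • u with hgdef
  have hgcont : Continuous g :=
    continuous_id.add ((continuous_const.sub continuous_norm).smul continuous_const)
  have hgP : ∀ x ∈ Metric.closedBall (0 : EuclideanSpace ℝ (Fin N)) 1 ∩ P, g x ∈ P := by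
    rintro x ⟨hx1, hx2⟩
    rw [Metric.mem_closedBall, dist_zero_right] at hx1
    rcases lt_or_eq_of_le hx1 with hlt | heq
    · have ht : (0:ℝ) < 1 - ‖x‖ := by linarith
      have htu : (1 - ‖x‖) • u ∈ P := hPcone u huP _ ht
      have hmid := hPconv hx2 htu (le_of_lt one_half_pos) (le_of_lt one_half_pos) (by norm_num)
      have := hPcone _ hmid 2 (by norm_num)
      rw [smul_add, smul_smul, smul_smul] at this
      norm_num at this
      exact this
    · have : g x = x := by simp [hgdef, ← heq]
      rw [this]; exact hx2
  have hgne : ∀ x ∈ Metric.closedBall (0 : EuclideanSpace ℝ (Fin N)) 1 ∩ P, g x ≠ 0 := by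
    rintro x ⟨hx1, hx2⟩ hzero
    rw [Metric.mem_closedBall, dist_zero_right] at hx1
    have hx0 : x = -((1 - ‖x‖) • u) := by
      have : x + (1 - ‖x‖) • u = 0 := hzero
      linear_combination (norm := abel) this
    rcases eq_or_lt_of_le (sub_nonneg.mpr hx1) with h0 | hpos
    · -- 1 - ‖x‖ = 0, so x = 0, so ‖x‖ = 0, contradiction
      have hx00 : x = 0 := by rw [hx0, ← h0]; simp
      rw [hx00] at h0
      simp at h0
    · obtain ⟨t, htpos, hxt⟩ : ∃ t : ℝ, 0 < t ∧ x = -(t • u) := ⟨1 - ‖x‖, hpos, hx0⟩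
      have hinv := hPcone x hx2 t⁻¹ (inv_pos.mpr htpos)
      have heq : t⁻¹ • x = -u := by
        rw [hxt, smul_neg, smul_smul, inv_mul_cancel₀ (ne_of_gt htpos), one_smul]
      rw [heq] at hinv
      exact hun hinv
  refine ⟨fun x => ‖g x‖⁻¹ • g x, ?_, ?_, ?_⟩
  · exact ((hgcont.norm.continuousOn.inv₀ (fun x hx => by
        simpa using norm_ne_zero_iff.mpr (hgne x hx))).smul hgcont.continuousOn)
  · intro x hx
    have hne := hgne x hx
    have hnorm : ‖g x‖ ≠ 0 := norm_ne_zero_iff.mpr hne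
    constructor
    · rw [Metric.mem_sphere, dist_zero_right, norm_smul, norm_inv, norm_norm,
        inv_mul_cancel₀ hnorm]
    · exact hPcone _ (hgP x hx) _ (inv_pos.mpr (norm_pos_iff.mpr hne))
  · rintro x ⟨hx1, hx2⟩
    rw [Metric.mem_sphere, dist_zero_right] at hx1
    have hgx : g x = x := by simp [hgdef, hx1]
    show ‖g x‖⁻¹ • g x = x
    rw [hgx, hx1]
    simp
end

section
/- Let P be a closed convex cone with vertex 0 in ℝ^N and ζ : B̄ ∩ P ⇉ ℝ^N a correspondence such that ⟨p, z⟩ ≤ 0 for all p ∈ S ∩ P and all z ∈ ζ(p). If there exist x ∈ B̄ ∩ P and z ∈ ζ(x) with ⟨p, z⟩ ≤ ⟨x, z⟩ for all p ∈ B̄ ∩ P, then z ∈ P° ∩ ζ(x). -/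
open scoped RealInnerProductSpace

/-- Supporting lemma: a solution of the variational inequality lies in the polar cone. -/
theorem supporting_lemma {N : ℕ} (P : Set (EuclideanSpace ℝ (Fin N)))
    (hPclosed : IsClosed P) (hPconv : Convex ℝ P) (hP0 : (0 : EuclideanSpace ℝ (Fin N)) ∈ P)
    (hPcone : ∀ x ∈ P, ∀ l : ℝ, 0 < l → l • x ∈ P)
    (ζ : EuclideanSpace ℝ (Fin N) → Set (EuclideanSpace ℝ (Fin N)))
    (hwalras : ∀ p ∈ Metric.sphere (0 : EuclideanSpace ℝ (Fin N)) 1 ∩ P,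
      ∀ z ∈ ζ p, ⟪p, z⟫ ≤ 0)
    (x : EuclideanSpace ℝ (Fin N))
    (hx : x ∈ Metric.closedBall (0 : EuclideanSpace ℝ (Fin N)) 1 ∩ P)
    (z : EuclideanSpace ℝ (Fin N)) (hz : z ∈ ζ x)
    (hvi : ∀ p ∈ Metric.closedBall (0 : EuclideanSpace ℝ (Fin N)) 1 ∩ P,
      ⟪p, z⟫ ≤ ⟪x, z⟫) :
    (∀ q ∈ P, ⟪q, z⟫ ≤ 0) ∧ z ∈ ζ x := by
  have h0 : ⟪x, z⟫ ≥ 0 := by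
    have := hvi 0 ⟨by simp, hP0⟩
    simpa using this
  have hxz : ⟪x, z⟫ = 0 := by
    by_contra h
    have hpos : 0 < ⟪x, z⟫ := lt_of_le_of_ne h0 (Ne.symm h)
    have hxne : x ≠ 0 := by
      intro hx0
      rw [hx0] at hpos
      simp at hpos
    have hnx : (0:ℝ) < ‖x‖ := norm_pos_iff.mpr hxne
    have hxle : ‖x‖ ≤ 1 := by simpa [dist_zero_right] using hx.1
    rcases lt_or_eq_of_le hxle with hlt | heq
    · -- scale x up: contradiction with hvi
      set p := (‖x‖⁻¹ : ℝ) • x with hp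
      have hpP : p ∈ P := hPcone x hx.2 _ (inv_pos.mpr hnx)
      have hpb : p ∈ Metric.closedBall (0 : EuclideanSpace ℝ (Fin N)) 1 := by
        simp only [Metric.mem_closedBall, dist_zero_right, hp, norm_smul, norm_inv,
          norm_norm]
        rw [inv_mul_cancel₀ hnx.ne']
      have := hvi p ⟨hpb, hpP⟩
      rw [hp, real_inner_smul_left] at this
      have h1 : (1:ℝ) < ‖x‖⁻¹ := (one_lt_inv₀ hnx).mpr hlt
      nlinarith
    · have hps : x ∈ Metric.sphere (0 : EuclideanSpace ℝ (Fin N)) 1 := by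
        simp [heq]
      have := hwalras x ⟨hps, hx.2⟩ z hz
      linarith
  refine ⟨fun q hq => ?_, hz⟩
  rcases eq_or_ne q 0 with rfl | hqne
  · simp
  · have hnq : (0:ℝ) < ‖q‖ := norm_pos_iff.mpr hqne
    have hm : (0:ℝ) < max ‖q‖ 1 := lt_of_lt_of_le hnq (le_max_left _ _)
    set p := ((max ‖q‖ 1)⁻¹ : ℝ) • q with hp
    have hpP : p ∈ P := hPcone q hq _ (inv_pos.mpr hm)
    have hpb : p ∈ Metric.closedBall (0 : EuclideanSpace ℝ (Fin N)) 1 := by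
      simp only [Metric.mem_closedBall, dist_zero_right, hp, norm_smul,
        norm_inv]
      rw [Real.norm_of_nonneg hm.le, inv_mul_le_iff₀ hm, mul_one]
      exact le_max_left _ _
    have := hvi p ⟨hpb, hpP⟩
    rw [hp, real_inner_smul_left, hxz] at this
    nlinarith [inv_pos.mpr hm]
end

section
/- Let P be a closed convex cone with vertex 0 in ℝ^N and ζ : B̄ ∩ P → ℝ^N a map satisfying ⟨p, ζ(p)⟩ ≤ 0 for all p ∈ S ∩ P. If there exists x ∈ B̄ ∩ P such that ⟨p, ζ(x)⟩ ≤ ⟨x, ζ(x)⟩ for all p ∈ B̄ ∩ P, then ζ(x) ∈ P°. -/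
open scoped RealInnerProductSpace

/-- Supporting lemma, single-valued version. -/
theorem supporting_lemma_map {N : ℕ} (P : Set (EuclideanSpace ℝ (Fin N)))
    (hPclosed : IsClosed P) (hPconv : Convex ℝ P) (hP0 : (0 : EuclideanSpace ℝ (Fin N)) ∈ P)
    (hPcone : ∀ x ∈ P, ∀ l : ℝ, 0 < l → l • x ∈ P)
    (ζ : EuclideanSpace ℝ (Fin N) → EuclideanSpace ℝ (Fin N))
    (hwalras : ∀ p ∈ Metric.sphere (0 : EuclideanSpace ℝ (Fin N)) 1 ∩ P, ⟪p, ζ p⟫ ≤ 0)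
    (x : EuclideanSpace ℝ (Fin N))
    (hx : x ∈ Metric.closedBall (0 : EuclideanSpace ℝ (Fin N)) 1 ∩ P)
    (hvi : ∀ p ∈ Metric.closedBall (0 : EuclideanSpace ℝ (Fin N)) 1 ∩ P,
      ⟪p, ζ x⟫ ≤ ⟪x, ζ x⟫) :
    ∀ q ∈ P, ⟪q, ζ x⟫ ≤ 0 := by
  intro q hq
  have hxnorm : ‖x‖ ≤ 1 := by
    have := hx.1; rwa [Metric.mem_closedBall, dist_zero_right] at this
  have hM : ⟪x, ζ x⟫ ≤ 0 := by
    rcases eq_or_ne x 0 with h0 | h0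
    · simp [h0]
    · have hnx : 0 < ‖x‖ := norm_pos_iff.mpr h0
      rcases eq_or_lt_of_le hxnorm with h1 | h1
      · exact hwalras x ⟨mem_sphere_zero_iff_norm.mpr h1, hx.2⟩
      · have hinv : 1 < ‖x‖⁻¹ := (one_lt_inv₀ hnx).mpr h1
        have hp : (‖x‖⁻¹ • x) ∈ Metric.closedBall (0 : EuclideanSpace ℝ (Fin N)) 1 ∩ P := by
          refine ⟨Metric.mem_closedBall.mpr ?_, hPcone x hx.2 _ (inv_pos.mpr hnx)⟩
          rw [dist_zero_right, norm_smul, norm_inv, norm_norm, inv_mul_cancel₀ hnx.ne']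
        have h2 := hvi _ hp
        rw [real_inner_smul_left] at h2
        nlinarith
  rcases eq_or_ne q 0 with h0 | h0
  · simp [h0]
  · have hnq : 0 < ‖q‖ := norm_pos_iff.mpr h0
    have hp : (‖q‖⁻¹ • q) ∈ Metric.closedBall (0 : EuclideanSpace ℝ (Fin N)) 1 ∩ P := by
      refine ⟨Metric.mem_closedBall.mpr ?_, hPcone q hq _ (inv_pos.mpr hnq)⟩
      rw [dist_zero_right, norm_smul, norm_inv, norm_norm, inv_mul_cancel₀ hnq.ne']
    have h1 := hvi _ hp
    rw [real_inner_smul_left] at h1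
    have h2 : ‖q‖⁻¹ * ⟪q, ζ x⟫ ≤ 0 := h1.trans hM
    nlinarith [inv_pos.mpr hnq]
end

section
/- Let C be a nonempty compact convex subset of ℝ^N and f : C → ℝ^N continuous. Define g(x) = π_C(x + f(x)), where π_C is the metric projection onto C. If x̄ is a fixed point of g, then ⟨v, f(x̄)⟩ ≤ ⟨x̄, f(x̄)⟩ for all v ∈ C. -/
open scoped RealInnerProductSpace

/-- Brouwer implies Hartman–Stampacchia: a fixed point of `x ↦ π_C (x + f x)`
solves the variational inequality. -/
theorem fixed_point_projection_solves_vi {N : ℕ}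
    (C : Set (EuclideanSpace ℝ (Fin N)))
    (hC : C.Nonempty) (hCc : IsCompact C) (hCconv : Convex ℝ C)
    (f : EuclideanSpace ℝ (Fin N) → EuclideanSpace ℝ (Fin N))
    (hf : ContinuousOn f C)
    (π : EuclideanSpace ℝ (Fin N) → EuclideanSpace ℝ (Fin N))
    (hπmem : ∀ y, π y ∈ C)
    (hπproj : ∀ y, ∀ c ∈ C, ⟪y - π y, c - π y⟫ ≤ 0)
    (x : EuclideanSpace ℝ (Fin N)) (hx : π (x + f x) = x) :
    ∀ v ∈ C, ⟪v, f x⟫ ≤ ⟪x, f x⟫ := by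
  intro v hv
  have h := hπproj (x + f x) v hv
  rw [hx, add_sub_cancel_left] at h
  have : ⟪f x, v - x⟫ ≤ 0 := h
  rw [inner_sub_right] at this
  have := sub_nonpos.mp this
  rw [real_inner_comm]; nth_rewrite 2 [real_inner_comm]; exact this
end

section
/- Let P be a closed convex cone in ℝ^N that is not a linear subspace, let a be a nonzero vector in P° ∩ (−P) \ P, and for x ∈ B̄ ∩ P define λ_a(x) = (−⟨x, x−a⟩ + √(⟨x, x−a⟩² + (1−‖x‖²)‖x−a‖²)) / ‖x−a‖². Then λ_a(x) ≥ 0, ‖x + λ_a(x)(x−a)‖ = 1, x + λ_a(x)(x−a) ∈ P, λ_a is continuous on B̄ ∩ P, and λ_a(x) = 0 whenever ‖x‖ = 1. -/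
open scoped RealInnerProductSpace

lemma cone_combo {N : ℕ} {P : Set (EuclideanSpace ℝ (Fin N))}
    (hPconv : Convex ℝ P)
    (hPcone : ∀ x ∈ P, ∀ l : ℝ, 0 < l → l • x ∈ P)
    {x y : EuclideanSpace ℝ (Fin N)} (hx : x ∈ P) (hy : y ∈ P)
    {s t : ℝ} (hs : 0 < s) (ht : 0 < t) : s • x + t • y ∈ P := by
  have hst : (0:ℝ) < s + t := by linarith
  have hmem : (s / (s + t)) • x + (t / (s + t)) • y ∈ P :=
    hPconv hx hy (by positivity) (by positivity) (by field_simp)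
  have := hPcone _ hmem (s + t) hst
  have heq : (s + t) • ((s / (s + t)) • x + (t / (s + t)) • y) = s • x + t • y := by
    rw [smul_add, smul_smul, smul_smul]
    congr 1 <;> congr 1 <;> field_simp
  rwa [heq] at this

/-- Properties of the explicit retraction coefficient `λ_a`. -/
theorem retraction_coefficient {N : ℕ} (P : Set (EuclideanSpace ℝ (Fin N)))
    (hPclosed : IsClosed P) (hPconv : Convex ℝ P)
    (hPcone : ∀ x ∈ P, ∀ l : ℝ, 0 < l → l • x ∈ P)
    (hProper : P ⊂ (Submodule.span ℝ P : Set (EuclideanSpace ℝ (Fin N))))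
    (a : EuclideanSpace ℝ (Fin N)) (ha0 : a ≠ 0)
    (haPolar : ∀ p ∈ P, ⟪p, a⟫ ≤ 0) (haNeg : -a ∈ P) (haNotP : a ∉ P)
    (lam : EuclideanSpace ℝ (Fin N) → ℝ)
    (hlam : ∀ x, lam x = (-⟪x, x - a⟫ +
      Real.sqrt (⟪x, x - a⟫ ^ 2 + (1 - ‖x‖ ^ 2) * ‖x - a‖ ^ 2)) / ‖x - a‖ ^ 2) :
    (∀ x ∈ Metric.closedBall (0 : EuclideanSpace ℝ (Fin N)) 1 ∩ P,
      0 ≤ lam x ∧ ‖x + lam x • (x - a)‖ = 1 ∧ x + lam x • (x - a) ∈ P) ∧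
    ContinuousOn lam (Metric.closedBall (0 : EuclideanSpace ℝ (Fin N)) 1 ∩ P) ∧
    (∀ x ∈ Metric.closedBall (0 : EuclideanSpace ℝ (Fin N)) 1 ∩ P,
      ‖x‖ = 1 → lam x = 0) := by
  -- basic facts for x in the set
  have hxa : ∀ x ∈ P, (0:ℝ) < ‖x - a‖ ^ 2 := by
    intro x hxP
    have hne : x - a ≠ 0 := sub_ne_zero.mpr (fun h => haNotP (h ▸ hxP))
    exact pow_pos (norm_pos_iff.mpr hne) 2
  have hDnn : ∀ x ∈ Metric.closedBall (0 : EuclideanSpace ℝ (Fin N)) 1,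
      0 ≤ ⟪x, x - a⟫ ^ 2 + (1 - ‖x‖ ^ 2) * ‖x - a‖ ^ 2 := by
    intro x hx
    have hx1 : ‖x‖ ≤ 1 := by simpa using mem_closedBall_zero_iff.mp hx
    have : ‖x‖ ^ 2 ≤ 1 := by nlinarith [norm_nonneg x]
    nlinarith [sq_nonneg ⟪x, x - a⟫, sq_nonneg ‖x - a‖]
  refine ⟨?_, ?_, ?_⟩
  · rintro x ⟨hxB, hxP⟩
    set b := ⟪x, x - a⟫ with hbdef
    set A := ‖x - a‖ ^ 2 with hAdef
    set D := b ^ 2 + (1 - ‖x‖ ^ 2) * A with hDdef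
    have hA : 0 < A := hxa x hxP
    have hD : 0 ≤ D := hDnn x hxB
    have hsD : Real.sqrt D ^ 2 = D := Real.sq_sqrt hD
    have hsb : b ≤ Real.sqrt D := by
      have h1 : |b| = Real.sqrt (b ^ 2) := (Real.sqrt_sq_eq_abs b).symm
      have h2 : Real.sqrt (b ^ 2) ≤ Real.sqrt D := by
        apply Real.sqrt_le_sqrt
        have hx1 : ‖x‖ ≤ 1 := by simpa using mem_closedBall_zero_iff.mp hxB
        have hx2 : ‖x‖ ^ 2 ≤ 1 := by nlinarith [norm_nonneg x]
        nlinarith [hDdef, mul_nonneg (by linarith : (0:ℝ) ≤ 1 - ‖x‖ ^ 2) hA.le]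
      calc b ≤ |b| := le_abs_self b
        _ = Real.sqrt (b ^ 2) := h1
        _ ≤ Real.sqrt D := h2
    have hlamx : lam x = (-b + Real.sqrt D) / A := hlam x
    have hlam0 : 0 ≤ lam x := by
      rw [hlamx]
      apply div_nonneg _ hA.le
      linarith
    refine ⟨hlam0, ?_, ?_⟩
    · -- norm equals 1
      have hsq : ‖x + lam x • (x - a)‖ ^ 2 = 1 := by
        rw [norm_add_sq_real, real_inner_smul_right, norm_smul, Real.norm_eq_abs, mul_pow, sq_abs]
        rw [← hbdef, ← hAdef, hlamx]
        field_simp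
        nlinarith [hsD]
      have hnn : 0 ≤ ‖x + lam x • (x - a)‖ := norm_nonneg _
      nlinarith [hsq, hnn]
    · -- membership in P
      rcases eq_or_lt_of_le hlam0 with h0 | hpos
      · rw [← h0]; simpa using hxP
      · have heq : x + lam x • (x - a) = (1 + lam x) • x + lam x • (-a) := by
          module
        rw [heq]
        exact cone_combo hPconv hPcone hxP haNeg (by linarith) hpos
  · -- continuity
    have hfun : lam = fun x => (-⟪x, x - a⟫ +
        Real.sqrt (⟪x, x - a⟫ ^ 2 + (1 - ‖x‖ ^ 2) * ‖x - a‖ ^ 2)) / ‖x - a‖ ^ 2 :=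
      funext hlam
    intro x hx
    have hA : (0:ℝ) < ‖x - a‖ ^ 2 := hxa x hx.2
    have c1 : Continuous fun y : EuclideanSpace ℝ (Fin N) => ⟪y, y - a⟫ :=
      continuous_id.inner (continuous_id.sub continuous_const)
    have c2 : Continuous fun y : EuclideanSpace ℝ (Fin N) => ‖y - a‖ ^ 2 :=
      ((continuous_id.sub continuous_const).norm).pow 2
    have c3 : Continuous fun y : EuclideanSpace ℝ (Fin N) =>
        -⟪y, y - a⟫ + Real.sqrt (⟪y, y - a⟫ ^ 2 + (1 - ‖y‖ ^ 2) * ‖y - a‖ ^ 2) :=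
      c1.neg.add (Real.continuous_sqrt.comp
        ((c1.pow 2).add ((continuous_const.sub (continuous_norm.pow 2)).mul c2)))
    have : ContinuousAt lam x := by
      rw [hfun]
      exact ContinuousAt.div c3.continuousAt c2.continuousAt hA.ne'
    exact this.continuousWithinAt
  · rintro x ⟨hxB, hxP⟩ hx1
    have hb : (1:ℝ) ≤ ⟪x, x - a⟫ := by
      have h1 : ⟪x, x - a⟫ = ‖x‖ ^ 2 - ⟪x, a⟫ := by
        rw [inner_sub_right, real_inner_self_eq_norm_sq]
      have h2 : ⟪x, a⟫ ≤ 0 := haPolar x hxP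
      rw [h1, hx1]
      linarith
    have hD : ⟪x, x - a⟫ ^ 2 + (1 - ‖x‖ ^ 2) * ‖x - a‖ ^ 2 = ⟪x, x - a⟫ ^ 2 := by
      rw [hx1]; ring
    rw [hlam x, hD, Real.sqrt_sq (by linarith)]
    simp
end
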